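/- arXiv:1103.5255 — 7 statements merged into one kernel-verified Lean document; each statement's English description precedes it below -/
import Mathlib

section
/- Let G be a finite group and V an irreducible representation of G over an algebraically closed field of characteristic zero. Then every solvable G-stable Lie subalgebra of sl(V) is abelian. -/
attribute [local instance 100] LieRing.ofAssociativeRing

/-- A representation is irreducible: `V` is nonzero and the only `G`-stable subspaces are
`⊥` and `⊤`. -/
def Representation.IsIrred {k G V : Type*} [CommSemiring k] [Monoid G]
    [AddCommMonoid V] [Module k V] (ρ : Representation k G V) : Prop :=
  Nontrivial V ∧ ∀ U : Submodule k V, (∀ g : G, ∀ v ∈ U, ρ g v ∈ U) → U = ⊥ ∨ U = ⊤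

/-- A Lie subalgebra of `End(V)` is `G`-stable if it is stable under conjugation by the
representation. -/
def Representation.StableLieSubalgebra {k G V : Type*} [CommRing k] [Group G]
    [AddCommGroup V] [Module k V] (ρ : Representation k G V)
    (L : LieSubalgebra k (Module.End k V)) : Prop :=
  ∀ g : G, ∀ f ∈ L, ρ g * f * ρ g⁻¹ ∈ L


/-! By Lie's theorem the solvable algebra `L` has a common eigenvector `v`, and every commutator
`⁅a, b⁆` with `a, b ∈ L` kills it. Since conjugation by `ρ g` permutes these commutators, their
common kernel is a nonzero `G`-invariant subspace, hence all of `V` by irreducibility; so all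
commutators vanish. -/

namespace Representation

variable {k G V : Type*} [CommRing k] [Group G] [AddCommGroup V] [Module k V]
  {ρ : Representation k G V}

lemma IsIrred.eq_top_of_mem (hρ : ρ.IsIrred) {U : Submodule k V}
    (hU : ∀ g : G, ∀ v ∈ U, ρ g v ∈ U) {v : V} (hvU : v ∈ U) (hv : v ≠ 0) : U = ⊤ :=
  (hρ.2 U hU).resolve_left fun h => hv (by simpa [h] using hvU)

lemma iInf_ker_invariant {S : Set (Module.End k V)}
    (hS : ∀ g : G, ∀ f ∈ S, ρ g * f * ρ g⁻¹ ∈ S) :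
    ∀ g : G, ∀ v ∈ ⨅ f ∈ S, LinearMap.ker f, ρ g v ∈ ⨅ f ∈ S, LinearMap.ker f := by
  simp only [Submodule.mem_iInf, LinearMap.mem_ker]
  intro g v hv f hf
  have h := hv _ (hS g⁻¹ f hf)
  rw [inv_inv, Module.End.mul_apply, Module.End.mul_apply, inv_apply_eq_iff] at h
  rw [h, map_zero]

variable (ρ) in
lemma conj_lie (g : G) (a b : Module.End k V) :
    ρ g * ⁅a, b⁆ * ρ g⁻¹ = ⁅ρ g * a * ρ g⁻¹, ρ g * b * ρ g⁻¹⁆ := by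
  have h : ρ g⁻¹ * ρ g = 1 := by rw [← map_mul, inv_mul_cancel, map_one]
  simp only [LieRing.of_associative_ring_bracket, mul_sub, sub_mul, mul_assoc,
    ← mul_assoc (ρ g⁻¹) (ρ g), h, one_mul]

lemma StableLieSubalgebra.conj_mem_image2_lie {L : LieSubalgebra k (Module.End k V)}
    (hL : ρ.StableLieSubalgebra L) (g : G) :
    ∀ f ∈ Set.image2 (⁅·, ·⁆) (L : Set (Module.End k V)) L,
      ρ g * f * ρ g⁻¹ ∈ Set.image2 (⁅·, ·⁆) (L : Set (Module.End k V)) L := by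
  rintro - ⟨a, ha, b, hb, rfl⟩
  exact ⟨_, hL g a ha, _, hL g b hb, (ρ.conj_lie g a b).symm⟩

end Representation

lemma Module.End.lie_apply_eq_zero_of_apply_eq_smul {k V : Type*} [CommRing k] [AddCommGroup V]
    [Module k V] {a b : Module.End k V} {v : V} {α β : k} (ha : a v = α • v)
    (hb : b v = β • v) : ⁅a, b⁆ v = 0 := by
  simp only [LieRing.of_associative_ring_bracket, LinearMap.sub_apply, Module.End.mul_apply,
    ha, hb, map_smul, smul_smul, mul_comm α, sub_self]

lemma LieSubalgebra.exists_ne_zero_forall_lie_apply_eq_zero {k V : Type*} [Field k]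
    [IsAlgClosed k] [CharZero k] [AddCommGroup V] [Module k V] [FiniteDimensional k V]
    [Nontrivial V] (L : LieSubalgebra k (Module.End k V)) [LieAlgebra.IsSolvable L] :
    ∃ v : V, v ≠ 0 ∧ ∀ a ∈ L, ∀ b ∈ L, ⁅a, b⁆ v = 0 := by
  obtain ⟨χ, hχ⟩ := LieModule.exists_nontrivial_weightSpace_of_isSolvable k L V
  obtain ⟨⟨v, hv⟩, hv0⟩ := exists_ne (0 : LieModule.weightSpace V χ)
  refine ⟨v, by simpa using hv0, fun a ha b hb => ?_⟩
  rw [LieModule.mem_weightSpace] at hv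
  exact Module.End.lie_apply_eq_zero_of_apply_eq_smul (hv ⟨a, ha⟩) (hv ⟨b, hb⟩)

theorem solvable_G_stable_subalgebra_abelian_general
    {k G V : Type*} [Field k] [IsAlgClosed k] [CharZero k] [Group G]
    [AddCommGroup V] [Module k V] [FiniteDimensional k V]
    (ρ : Representation k G V) (hirr : ρ.IsIrred)
    (L : LieSubalgebra k (Module.End k V))
    (hstab : ρ.StableLieSubalgebra L)
    (hsolv : LieAlgebra.IsSolvable ↥L) :
    IsLieAbelian ↥L := by
  have : Nontrivial V := hirr.1
  obtain ⟨v, hv0, hv⟩ := L.exists_ne_zero_forall_lie_apply_eq_zero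
  set S := Set.image2 (⁅·, ·⁆) (L : Set (Module.End k V)) (L : Set (Module.End k V))
  set K := ⨅ f ∈ S, LinearMap.ker f
  have hvK : v ∈ K := by
    simp only [K, S, Submodule.mem_iInf, LinearMap.mem_ker, Set.forall_mem_image2]
    exact hv
  have hK : K = ⊤ :=
    hirr.eq_top_of_mem (Representation.iInf_ker_invariant hstab.conj_mem_image2_lie) hvK hv0
  refine ⟨fun x y => Subtype.ext (LinearMap.ext fun w => ?_)⟩
  have hw : w ∈ K := hK ▸ Submodule.mem_top
  simp only [K, Submodule.mem_iInf, LinearMap.mem_ker] at hw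
  exact hw _ (Set.mem_image2_of_mem x.2 y.2)

/-- Every solvable `G`-stable Lie subalgebra of `sl(V)` (traceless
endomorphisms), for `V` an irreducible representation of a finite group `G` over an
algebraically closed field of characteristic zero, is abelian. -/
theorem solvable_G_stable_subalgebra_abelian
    {k G V : Type*} [Field k] [IsAlgClosed k] [CharZero k] [Group G] [Finite G]
    [AddCommGroup V] [Module k V] [FiniteDimensional k V]
    (ρ : Representation k G V) (hirr : ρ.IsIrred)
    (L : LieSubalgebra k (Module.End k V))
    (hsl : ∀ f ∈ L, LinearMap.trace k V f = 0)
    (hstab : ρ.StableLieSubalgebra L)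
    (hsolv : LieAlgebra.IsSolvable ↥L) :
    IsLieAbelian ↥L :=
  solvable_G_stable_subalgebra_abelian_general ρ hirr L hstab hsolv
end

section
/- Let G be a finite group and V an irreducible G-representation over an algebraically closed field of characteristic zero. If V is imprimitive (i.e., V decomposes as a direct sum of at least two nonzero subspaces permuted by G), then sl(V) contains a non-zero abelian G-stable Lie subalgebra. -/
/-! The endomorphisms acting by a scalar on each block `W i` of the decomposition commute with
each other, and conjugation by `ρ g` merely permutes their scalars, since `ρ g` permutes the
blocks. The traceless ones therefore form an abelian `G`-stable Lie subalgebra of `sl(V)`. It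
is nonzero: with two nonzero blocks, the projection onto one block along the others is not a
scalar, so subtracting its mean eigenvalue `trace / dim` (possible in characteristic zero)
leaves a nonzero traceless element. -/

attribute [local instance 100] LieRing.ofAssociativeRing

/-- A representation is imprimitive if `V` is a direct sum of at least two nonzero subspaces
which are permuted by the action of `G`. -/
def Representation.IsImprimitive {k G V : Type*} [CommSemiring k] [Monoid G]
    [AddCommMonoid V] [Module k V] (ρ : Representation k G V) : Prop :=
  ∃ (ι : Type) (W : ι → Submodule k V),
    (∀ i, W i ≠ ⊥) ∧ (∃ i j : ι, i ≠ j) ∧ iSupIndep W ∧ iSup W = ⊤ ∧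
    ∀ (g : G) (i : ι), ∃ j : ι, (W i).map (ρ g) ≤ W j

open Module

theorem iSupIndep.isCompl_biSup_ne {α ι : Type*} [CompleteLattice α] {t : ι → α}
    (ht : iSupIndep t) (htop : iSup t = ⊤) (i : ι) :
    IsCompl (t i) (⨆ (j) (_ : j ≠ i), t j) :=
  ⟨ht i, codisjoint_iff.2 (by rw [← iSup_split_single, htop])⟩

theorem LinearMap.trace_sub_trace_div_finrank_smul_one {k V : Type*} [Field k] [AddCommGroup V]
    [Module k V] [FiniteDimensional k V] (f : End k V) (hV : (finrank k V : k) ≠ 0) :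
    trace k V (f - (trace k V f / finrank k V) • 1) = 0 := by
  rw [map_sub, map_smul, trace_one, smul_eq_mul, div_mul_cancel₀ _ hV, sub_self]

namespace LieSubalgebra

variable {R A : Type*} [CommRing R] [Ring A] [Algebra R A]

def ofCommute (p : Submodule R A) (hp : ∀ a ∈ p, ∀ b ∈ p, Commute a b) : LieSubalgebra R A where
  toSubmodule := p
  lie_mem' ha hb := by
    rw [commute_iff_lie_eq.1 (hp _ ha _ hb)]
    exact p.zero_mem

instance isLieAbelian_ofCommute (p : Submodule R A) (hp : ∀ a ∈ p, ∀ b ∈ p, Commute a b) :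
    IsLieAbelian (ofCommute p hp) :=
  ⟨fun a b => Subtype.ext (commute_iff_lie_eq.1 (hp _ a.2 _ b.2))⟩

end LieSubalgebra

namespace Module.End

section CommRing

variable {R M ι : Type*} [CommRing R] [AddCommGroup M] [Module R M]

def blockScalars (W : ι → Submodule R M) : Submodule R (End R M) where
  carrier := {f | ∀ i, ∃ c : R, ∀ v ∈ W i, f v = c • v}
  add_mem' {f g} hf hg i := by
    obtain ⟨c, hc⟩ := hf i
    obtain ⟨d, hd⟩ := hg i
    exact ⟨c + d, fun v hv => by rw [LinearMap.add_apply, hc v hv, hd v hv, add_smul]⟩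
  zero_mem' _ := ⟨0, fun v _ => by rw [LinearMap.zero_apply, zero_smul]⟩
  smul_mem' a f hf i := by
    obtain ⟨c, hc⟩ := hf i
    exact ⟨a * c, fun v hv => by rw [LinearMap.smul_apply, hc v hv, mul_smul]⟩

variable {W : ι → Submodule R M}

theorem one_mem_blockScalars : (1 : End R M) ∈ blockScalars W :=
  fun _ => ⟨1, fun v _ => (one_smul R v).symm⟩

theorem commute_of_mem_blockScalars (hW : iSup W = ⊤) {f g : End R M}
    (hf : f ∈ blockScalars W) (hg : g ∈ blockScalars W) : Commute f g := by
  refine LinearMap.ext_on (s := ⋃ i, (W i : Set M)) (by rw [← Submodule.iSup_eq_span, hW]) ?_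
  intro v hv
  obtain ⟨i, hv⟩ := Set.mem_iUnion.1 hv
  obtain ⟨c, hc⟩ := hf i
  obtain ⟨d, hd⟩ := hg i
  change f (g v) = g (f v)
  rw [hd v hv, hc v hv, map_smul, map_smul, hc v hv, hd v hv, smul_comm]

theorem mul_mul_mem_blockScalars {a b f : End R M} (hab : a * b = 1)
    (hb : ∀ i, ∃ j, (W i).map b ≤ W j) (hf : f ∈ blockScalars W) :
    a * f * b ∈ blockScalars W := by
  intro i
  obtain ⟨j, hj⟩ := hb i
  obtain ⟨c, hc⟩ := hf j
  refine ⟨c, fun v hv => ?_⟩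
  calc (a * f * b) v = a (f (b v)) := rfl
    _ = c • (a * b) v := by rw [hc _ (hj ⟨v, hv, rfl⟩), map_smul, mul_apply]
    _ = c • v := by rw [hab, one_apply]

theorem projection_mem_blockScalars (hind : iSupIndep W) (hW : iSup W = ⊤) (i : ι) :
    (W i).projection _ (hind.isCompl_biSup_ne hW i) ∈ blockScalars W := by
  intro j
  by_cases hji : j = i
  · subst hji
    exact ⟨1, fun v hv => by rw [Submodule.projection_apply_of_mem_left _ hv, one_smul]⟩
  · refine ⟨0, fun v hv => ?_⟩
    rw [zero_smul]
    exact Submodule.projection_apply_of_mem_right _ (le_iSup₂ (f := fun j _ => W j) j hji hv)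

end CommRing

section Field

variable {k V ι : Type*} [Field k] [CharZero k] [AddCommGroup V] [Module k V]
  [FiniteDimensional k V] {W : ι → Submodule k V}

theorem exists_mem_blockScalars_ne_zero_trace_eq_zero (hne : ∀ i, W i ≠ ⊥) {i j : ι}
    (hij : i ≠ j) (hind : iSupIndep W) (hW : iSup W = ⊤) :
    ∃ f ∈ blockScalars W, f ≠ 0 ∧ LinearMap.trace k V f = 0 := by
  obtain ⟨v, hvi, hv⟩ := Submodule.exists_mem_ne_zero_of_ne_bot (hne i)
  obtain ⟨w, hwj, hw⟩ := Submodule.exists_mem_ne_zero_of_ne_bot (hne j)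
  have : Nontrivial V := ⟨⟨v, 0, hv⟩⟩
  have hdim : (finrank k V : k) ≠ 0 := Nat.cast_ne_zero.2 finrank_pos.ne'
  set π := (W i).projection _ (hind.isCompl_biSup_ne hW i)
  set c : k := LinearMap.trace k V π / finrank k V
  refine ⟨π - c • 1, sub_mem (projection_mem_blockScalars hind hW i)
    (Submodule.smul_mem _ c one_mem_blockScalars), fun h => ?_,
    LinearMap.trace_sub_trace_div_finrank_smul_one π hdim⟩
  have hπ : ∀ u, π u = c • u := fun u => by
    simpa [sub_eq_zero] using LinearMap.congr_fun h u
  have hc1 : c = 1 := smul_left_injective k hv <| show c • v = (1 : k) • v by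
    rw [← hπ, one_smul, Submodule.projection_apply_of_mem_left _ hvi]
  have hc0 : c = 0 := smul_left_injective k hw <| show c • w = (0 : k) • w by
    rw [← hπ, zero_smul, Submodule.projection_apply_of_mem_right _
      (le_iSup₂ (f := fun m _ => W m) j hij.symm hwj)]
  exact one_ne_zero (hc1.symm.trans hc0)

end Field

end Module.End

theorem imprimitive_gives_abelian_subalgebra_general
    {k G V : Type*} [Field k] [CharZero k] [Group G]
    [AddCommGroup V] [Module k V] [FiniteDimensional k V]
    (ρ : Representation k G V) (himp : ρ.IsImprimitive) :
    ∃ L : LieSubalgebra k (Module.End k V),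
      L ≠ ⊥ ∧ (∀ f ∈ L, LinearMap.trace k V f = 0) ∧
      ρ.StableLieSubalgebra L ∧ IsLieAbelian ↥L := by
  obtain ⟨ι, W, hne, ⟨i, j, hij⟩, hind, hW, hperm⟩ := himp
  obtain ⟨f, hfW, hf0, hftr⟩ :=
    Module.End.exists_mem_blockScalars_ne_zero_trace_eq_zero hne hij hind hW
  refine ⟨.ofCommute (Module.End.blockScalars W ⊓ LinearMap.ker (LinearMap.trace k V))
    fun f hf g hg => Module.End.commute_of_mem_blockScalars hW hf.1 hg.1, ?_, fun f hf => hf.2,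
    fun g f hf => ⟨?_, ?_⟩, inferInstance⟩
  · exact fun h => hf0 ((LieSubalgebra.eq_bot_iff _).1 h f ⟨hfW, hftr⟩)
  · exact Module.End.mul_mul_mem_blockScalars (by rw [← map_mul, mul_inv_cancel, map_one])
      (hperm g⁻¹) hf.1
  · change LinearMap.trace k V _ = 0
    rw [LinearMap.trace_mul_comm, ← mul_assoc, ← map_mul, inv_mul_cancel, map_one, one_mul]
    exact hf.2

/-- If `V` is an irreducible but imprimitive representation of a finite group
`G` over an algebraically closed field of characteristic zero, then `sl(V)` contains a nonzero
abelian `G`-stable Lie subalgebra. -/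
theorem imprimitive_gives_abelian_subalgebra
    {k G V : Type*} [Field k] [IsAlgClosed k] [CharZero k] [Group G] [Finite G]
    [AddCommGroup V] [Module k V] [FiniteDimensional k V]
    (ρ : Representation k G V) (hirr : ρ.IsIrred) (himp : ρ.IsImprimitive) :
    ∃ L : LieSubalgebra k (Module.End k V),
      L ≠ ⊥ ∧ (∀ f ∈ L, LinearMap.trace k V f = 0) ∧
      ρ.StableLieSubalgebra L ∧ IsLieAbelian ↥L :=
  imprimitive_gives_abelian_subalgebra_general ρ himp
end

section
/- Let G be a finite group and V an irreducible G-representation over an algebraically closed field of characteristic zero. If sl(V) contains a non-zero abelian G-stable Lie subalgebra, then V is imprimitive. -/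
/-! Since `L` is abelian (hence nilpotent) and `k` is algebraically closed, `V` is the direct sum
of the generalized weight spaces of `L`, and `ρ g` carries the weight space of `χ` into that of
`χ ∘ Ad(ρ g)⁻¹`, so `G` permutes them. There are at least two weights: if `χ` were the only one,
every `x - χ x` would be nilpotent, so `trace x = 0` forces `χ = 0` in characteristic zero; then
`L` acts nilpotently, its joint kernel is a nonzero `G`-stable subspace, hence all of `V`, and
`L = 0`. -/

attribute [local instance 100] LieRing.ofAssociativeRing

open LieModule

lemma LinearMap.isNilpotent_of_isNilpotent_sub_algebraMap_of_trace_eq_zero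
    {K M : Type*} [Field K] [CharZero K] [AddCommGroup M] [Module K M] [FiniteDimensional K M]
    {f : Module.End K M} {c : K} (hf : IsNilpotent (f - algebraMap K _ c))
    (htr : LinearMap.trace K M f = 0) : IsNilpotent f := by
  rcases subsingleton_or_nontrivial M with _ | _
  · exact ⟨1, Subsingleton.elim _ _⟩
  have hc : c = 0 := by
    have h := (LinearMap.isNilpotent_trace_of_isNilpotent hf).eq_zero
    rw [map_sub, htr, Module.algebraMap_end_eq_smul_id, map_smul, LinearMap.trace_id,
      smul_eq_mul, zero_sub, neg_eq_zero] at h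
    exact (mul_eq_zero.mp h).resolve_right (Nat.cast_ne_zero.mpr Module.finrank_pos.ne')
  simpa [hc] using hf

namespace LieModule

variable {K L M : Type*} [Field K] [LieRing L] [LieAlgebra K L] [AddCommGroup M] [Module K M]
  [LieRingModule L M] [LieModule K L M] [LieRing.IsNilpotent L]

lemma exists_genWeightSpace_eq_top [FiniteDimensional K M] [IsTriangularizable K L M]
    [Subsingleton (Weight K L M)] :
    ∃ χ : L → K, genWeightSpace M χ = ⊤ := by
  rcases isEmpty_or_nonempty (Weight K L M) with _ | ⟨⟨χ⟩⟩
  · refine ⟨0, top_unique ?_⟩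
    rw [← iSup_genWeightSpace_eq_top' K L M, iSup_of_empty]
    exact bot_le
  · refine ⟨χ, top_unique ?_⟩
    rw [← iSup_genWeightSpace_eq_top' K L M]
    exact iSup_le fun ψ ↦ (Subsingleton.elim ψ χ) ▸ le_rfl

lemma isNilpotent_of_genWeightSpace_eq_top [CharZero K] [FiniteDimensional K M] {χ : L → K}
    (hχ : genWeightSpace M χ = ⊤) (htr : ∀ x : L, LinearMap.trace K M (toEnd K L M x) = 0) :
    IsNilpotent L M := by
  refine (isNilpotent_iff_forall' (R := K)).mpr fun x ↦ ?_
  obtain ⟨n, hn⟩ := exists_genWeightSpace_le_ker_of_isNoetherian M χ x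
  rw [hχ] at hn
  have hnil : _root_.IsNilpotent (toEnd K L M x - algebraMap K _ (χ x)) :=
    ⟨n, LinearMap.ker_eq_top.mp (top_unique fun m _ ↦ hn (LieSubmodule.mem_top m))⟩
  exact LinearMap.isNilpotent_of_isNilpotent_sub_algebraMap_of_trace_eq_zero hnil (htr x)

end LieModule

lemma Module.End.units_inv_apply_apply {R M : Type*} [Semiring R] [AddCommMonoid M] [Module R M]
    (u : (Module.End R M)ˣ) (m : M) : (↑u⁻¹ : Module.End R M) ((u : Module.End R M) m) = m := by
  rw [← Module.End.mul_apply, Units.inv_mul, Module.End.one_apply]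

namespace LieSubalgebra

variable {K V : Type*} [CommRing K] [AddCommGroup V] [Module K V]
  (L : LieSubalgebra K (Module.End K V)) (u : (Module.End K V)ˣ)

def conjByUnit (hu : ∀ f ∈ L, ↑u⁻¹ * f * ↑u ∈ L) (x : L) : L :=
  ⟨↑u⁻¹ * x * ↑u, hu x x.2⟩

@[simp]
lemma coe_conjByUnit (hu : ∀ f ∈ L, ↑u⁻¹ * f * ↑u ∈ L) (x : L) :
    (L.conjByUnit u hu x : Module.End K V) = ↑u⁻¹ * x * ↑u :=
  rfl

lemma map_maxTrivSubmodule_le (hu : ∀ f ∈ L, ↑u⁻¹ * f * ↑u ∈ L) :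
    (maxTrivSubmodule K L V : Submodule K V).map (u : Module.End K V) ≤
      maxTrivSubmodule K L V := by
  rintro _ ⟨v, hv, rfl⟩
  rw [SetLike.mem_coe, LieSubmodule.mem_toSubmodule, mem_maxTrivSubmodule] at hv
  intro x
  have hx : (x : Module.End K V) = ↑u * L.conjByUnit u hu x * ↑u⁻¹ := by
    simp [mul_assoc]
  change (x : Module.End K V) ((u : Module.End K V) v) = 0
  rw [hx, Module.End.mul_apply, Module.End.mul_apply, Module.End.units_inv_apply_apply]
  change (u : Module.End K V) ⁅L.conjByUnit u hu x, v⁆ = 0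
  rw [hv, map_zero]

lemma map_genWeightSpace_le [LieRing.IsNilpotent L] (hu : ∀ f ∈ L, ↑u⁻¹ * f * ↑u ∈ L)
    (χ : L → K) :
    (genWeightSpace V χ : Submodule K V).map (u : Module.End K V) ≤
      genWeightSpace V (χ ∘ L.conjByUnit u hu) := by
  rintro _ ⟨v, hv, rfl⟩
  rw [SetLike.mem_coe, LieSubmodule.mem_toSubmodule, mem_genWeightSpace] at hv
  rw [LieSubmodule.mem_toSubmodule, mem_genWeightSpace]
  intro x
  obtain ⟨n, hn⟩ := hv (L.conjByUnit u hu x)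
  refine ⟨n, ?_⟩
  have hx : toEnd K L V x - χ (L.conjByUnit u hu x) • 1 =
      ↑u * (toEnd K L V (L.conjByUnit u hu x) - χ (L.conjByUnit u hu x) • 1) * ↑u⁻¹ := by
    change (x : Module.End K V) - _ = ↑u * ((↑u⁻¹ * x * ↑u : Module.End K V) - _) * ↑u⁻¹
    simp [mul_sub, sub_mul, mul_assoc]
  rw [Function.comp_apply, hx, Units.conj_pow, Module.End.mul_apply, Module.End.mul_apply,
    Module.End.units_inv_apply_apply, hn, map_zero]

lemma exists_weight_map_genWeightSpace_le [LieRing.IsNilpotent L]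
    (hu : ∀ f ∈ L, ↑u⁻¹ * f * ↑u ∈ L) (χ : Weight K L V) :
    ∃ ψ : Weight K L V,
      (genWeightSpace V χ : Submodule K V).map (u : Module.End K V) ≤ genWeightSpace V ψ := by
  have hne : genWeightSpace V (χ ∘ L.conjByUnit u hu) ≠ ⊥ := by
    obtain ⟨v, hv, hv0⟩ := χ.exists_ne_zero
    intro hbot
    have huv := L.map_genWeightSpace_le u hu χ ⟨v, hv, rfl⟩
    rw [hbot, LieSubmodule.mem_toSubmodule, LieSubmodule.mem_bot] at huv
    apply hv0
    rw [← Module.End.units_inv_apply_apply u v, huv, map_zero]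
  exact ⟨⟨_, hne⟩, L.map_genWeightSpace_le u hu χ⟩

end LieSubalgebra

namespace Representation

lemma isImprimitive_of_finite {k G V ι : Type*} [CommSemiring k] [Monoid G] [AddCommMonoid V]
    [Module k V] [Finite ι] {ρ : Representation k G V} (W : ι → Submodule k V)
    (hW : ∀ i, W i ≠ ⊥) (htwo : ∃ i j : ι, i ≠ j) (hindep : iSupIndep W) (htop : iSup W = ⊤)
    (hperm : ∀ (g : G) (i : ι), ∃ j : ι, (W i).map (ρ g) ≤ W j) :
    ρ.IsImprimitive := by
  -- `IsImprimitive` asks for an index type in `Type`, so reindex by `Fin n`.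
  obtain ⟨n, ⟨e⟩⟩ := Finite.exists_equiv_fin ι
  refine ⟨Fin n, W ∘ e.symm, fun i ↦ hW _, ?_, hindep.comp e.symm.injective,
    (e.symm.iSup_comp (g := W)).trans htop, fun g i ↦ ?_⟩
  · obtain ⟨i, j, hij⟩ := htwo
    exact ⟨e i, e j, e.injective.ne hij⟩
  · obtain ⟨j, hj⟩ := hperm g (e.symm i)
    exact ⟨e j, by simpa using hj⟩

variable {k G V : Type*} [CommRing k] [Group G] [AddCommGroup V] [Module k V]
  {ρ : Representation k G V} {L : LieSubalgebra k (Module.End k V)}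

lemma StableLieSubalgebra.asGroupHom_conj_mem (hstab : ρ.StableLieSubalgebra L) (g : G) :
    ∀ f ∈ L, ↑(ρ.asGroupHom g)⁻¹ * f * ↑(ρ.asGroupHom g) ∈ L := by
  intro f hf
  simpa [← map_inv, asGroupHom_apply] using hstab g⁻¹ f hf

lemma IsIrred.eq_bot_of_isNilpotent (hirr : ρ.IsIrred) (hstab : ρ.StableLieSubalgebra L)
    [LieModule.IsNilpotent L V] : L = ⊥ := by
  have := hirr.1
  set U : Submodule k V := (maxTrivSubmodule k L V).toSubmodule
  have hU : U ≠ ⊥ := by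
    rw [Ne, LieSubmodule.toSubmodule_eq_bot, ← Ne, ← LieSubmodule.nontrivial_iff_ne_bot]
    exact nontrivial_max_triv_of_isNilpotent k L V
  have hUstab : ∀ (g : G), ∀ v ∈ U, ρ g v ∈ U := fun g v hv ↦ by
    have h := L.map_maxTrivSubmodule_le _ (hstab.asGroupHom_conj_mem g) ⟨v, hv, rfl⟩
    rwa [asGroupHom_apply] at h
  have hUtop : U = ⊤ := (hirr.2 U hUstab).resolve_left hU
  rw [LieSubalgebra.eq_bot_iff]
  intro f hf
  ext v
  exact (hUtop ▸ Submodule.mem_top : v ∈ U) ⟨f, hf⟩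

end Representation

theorem abelian_subalgebra_gives_imprimitive_general
    {k G V : Type*} [Field k] [IsAlgClosed k] [CharZero k] [Group G]
    [AddCommGroup V] [Module k V] [FiniteDimensional k V]
    (ρ : Representation k G V) (hirr : ρ.IsIrred)
    (L : LieSubalgebra k (Module.End k V)) (hne : L ≠ ⊥)
    (hsl : ∀ f ∈ L, LinearMap.trace k V f = 0)
    (hstab : ρ.StableLieSubalgebra L)
    (hab : IsLieAbelian ↥L) :
    ρ.IsImprimitive := by
  have := hab
  have htwo : ∃ χ ψ : Weight k L V, χ ≠ ψ := by
    by_contra! hsub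
    have : Subsingleton (Weight k L V) := ⟨hsub⟩
    obtain ⟨χ, hχ⟩ := exists_genWeightSpace_eq_top (K := k) (L := L) (M := V)
    have := isNilpotent_of_genWeightSpace_eq_top hχ fun x ↦ hsl x x.2
    exact hne (hirr.eq_bot_of_isNilpotent hstab)
  refine Representation.isImprimitive_of_finite (fun χ : Weight k L V ↦ genWeightSpace V χ)
    (fun χ ↦ by simpa using χ.genWeightSpace_ne_bot) htwo ?_ ?_ fun g χ ↦ ?_
  · exact LieSubmodule.iSupIndep_toSubmodule.mpr (iSupIndep_genWeightSpace' k L V)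
  · have h := iSup_genWeightSpace_eq_top' k L V
    rwa [← LieSubmodule.toSubmodule_inj, LieSubmodule.iSup_toSubmodule,
      LieSubmodule.top_toSubmodule] at h
  · simpa [Representation.asGroupHom_apply] using
      L.exists_weight_map_genWeightSpace_le _ (hstab.asGroupHom_conj_mem g) χ

/-- If `sl(V)` contains a nonzero abelian `G`-stable Lie subalgebra, for `V`
an irreducible representation of a finite group `G` over an algebraically closed field of
characteristic zero, then `V` is imprimitive. -/
theorem abelian_subalgebra_gives_imprimitive
    {k G V : Type*} [Field k] [IsAlgClosed k] [CharZero k] [Group G] [Finite G]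
    [AddCommGroup V] [Module k V] [FiniteDimensional k V]
    (ρ : Representation k G V) (hirr : ρ.IsIrred)
    (L : LieSubalgebra k (Module.End k V)) (hne : L ≠ ⊥)
    (hsl : ∀ f ∈ L, LinearMap.trace k V f = 0)
    (hstab : ρ.StableLieSubalgebra L)
    (hab : IsLieAbelian ↥L) :
    ρ.IsImprimitive :=
  abelian_subalgebra_gives_imprimitive_general ρ hirr L hne hsl hstab hab
end

section
/- Let V be an irreducible representation of a finite group G over an algebraically closed field of characteristic zero such that every non-zero G-submodule of sl(V) has dimension at least dim V. Then V is primitive. -/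
attribute [local instance 100] LieRing.ofAssociativeRing

/-
If `G` permutes the summands of `V = W₁ ⊕ ⋯ ⊕ Wₙ` with `n ≥ 2`, then the endomorphisms acting
by a scalar on each `Wᵢ` form an `n`-dimensional subspace of `End(V)` which is stable under
conjugation by `G` and contains the identity. Since `tr 1 = dim V ≠ 0` in characteristic zero,
its traceless part is a nonzero `G`-stable subspace of `sl(V)` of dimension `n - 1`, while
`n ≤ dim V`.
-/

open Module DirectSum

lemma LinearMap.ext_of_iSup_eq_top {R M N ι : Type*} [Semiring R] [AddCommMonoid M]
    [Module R M] [AddCommMonoid N] [Module R N] {W : ι → Submodule R M} (hW : iSup W = ⊤)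
    {f f' : M →ₗ[R] N} (hff' : ∀ i, ∀ v ∈ W i, f v = f' v) : f = f' := by
  refine LinearMap.ext_on (s := ⋃ i, (W i : Set M)) ?_ fun v hv ↦ ?_
  · rw [← Submodule.iSup_eq_span, hW]
  · obtain ⟨i, hi⟩ := Set.mem_iUnion.mp hv
    exact hff' i v hi

namespace DirectSum.IsInternal

variable {R M ι : Type*} [CommRing R] [AddCommGroup M] [Module R M] [DecidableEq ι]
  {W : ι → Submodule R M} (h : IsInternal W)

noncomputable def projection (i : ι) : Module.End R M :=
  (W i).subtype ∘ₗ component R ι (fun i ↦ W i) i ∘ₗ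
    (LinearEquiv.ofBijective (coeLinearMap W) h).symm.toLinearMap

lemma projection_apply_of_mem {i : ι} {v : M} (hv : v ∈ W i) : h.projection i v = v := by
  simp [projection, ← apply_eq_component, h.ofBijective_coeLinearMap_of_mem hv]

lemma projection_apply_of_mem_ne {i j : ι} (hij : i ≠ j) {v : M} (hv : v ∈ W i) :
    h.projection j v = 0 := by
  simp [projection, ← apply_eq_component, h.ofBijective_coeLinearMap_of_mem_ne hij hv]

variable [Fintype ι]

noncomputable def blockScalar : (ι → R) →ₗ[R] Module.End R M :=
  ∑ i, (LinearMap.proj i).smulRight (h.projection i)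

lemma blockScalar_apply_of_mem (c : ι → R) {i : ι} {v : M} (hv : v ∈ W i) :
    h.blockScalar c v = c i • v := by
  simp only [blockScalar, LinearMap.sum_apply, LinearMap.smulRight_apply, LinearMap.proj_apply,
    LinearMap.smul_apply]
  rw [Finset.sum_eq_single i (fun j _ hji ↦ by rw [h.projection_apply_of_mem_ne hji.symm hv,
    smul_zero]) (by simp), h.projection_apply_of_mem hv]

lemma mem_range_blockScalar_iff {f : Module.End R M} :
    f ∈ LinearMap.range h.blockScalar ↔ ∀ i, ∃ c : R, ∀ v ∈ W i, f v = c • v := by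
  constructor
  · rintro ⟨c, rfl⟩ i
    exact ⟨c i, fun v hv ↦ h.blockScalar_apply_of_mem c hv⟩
  · intro hf
    choose c hc using hf
    refine ⟨c, LinearMap.ext_of_iSup_eq_top h.submodule_iSup_eq_top fun i v hv ↦ ?_⟩
    rw [hc i v hv, h.blockScalar_apply_of_mem c hv]

lemma one_mem_range_blockScalar : 1 ∈ LinearMap.range h.blockScalar :=
  h.mem_range_blockScalar_iff.mpr fun _ ↦ ⟨1, fun v _ ↦ by simp⟩

lemma blockScalar_injective [IsCancelMulZero R] [Module.IsTorsionFree R M]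
    (hW : ∀ i, W i ≠ ⊥) :
    Function.Injective h.blockScalar := by
  refine (injective_iff_map_eq_zero _).mpr fun c hc ↦ funext fun i ↦ ?_
  obtain ⟨v, hv, hv0⟩ := Submodule.exists_mem_ne_zero_of_ne_bot (hW i)
  have : c i • v = 0 := by rw [← h.blockScalar_apply_of_mem c hv, hc, LinearMap.zero_apply]
  exact (smul_eq_zero.mp this).resolve_right hv0

lemma mul_mul_mem_range_blockScalar {a b f : Module.End R M} (hab : a * b = 1)
    (hb : ∀ i, ∃ j, (W i).map b ≤ W j) (hf : f ∈ LinearMap.range h.blockScalar) :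
    a * f * b ∈ LinearMap.range h.blockScalar := by
  rw [mem_range_blockScalar_iff] at hf ⊢
  intro i
  obtain ⟨j, hj⟩ := hb i
  obtain ⟨c, hc⟩ := hf j
  refine ⟨c, fun v hv ↦ ?_⟩
  calc (a * f * b) v = a (f (b v)) := rfl
    _ = c • (a * b) v := by rw [hc _ (hj (Submodule.mem_map_of_mem hv)), map_smul]; rfl
    _ = c • v := by rw [hab, Module.End.one_apply]

end DirectSum.IsInternal

lemma Submodule.finrank_inf_ker_add_one {K E : Type*} [Field K] [AddCommGroup E] [Module K E]
    [FiniteDimensional K E] {U : Submodule K E} {φ : Module.Dual K E} {x : E} (hx : x ∈ U)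
    (hφx : φ x ≠ 0) : finrank K ↥(U ⊓ LinearMap.ker φ) + 1 = finrank K U := by
  have hφU : φ ∘ₗ U.subtype ≠ 0 := fun h0 ↦ hφx (LinearMap.congr_fun h0 ⟨x, hx⟩)
  rw [← Submodule.map_comap_subtype, Submodule.finrank_map_subtype_eq, ← LinearMap.ker_comp]
  exact Module.Dual.finrank_ker_add_one_of_ne_zero hφU

theorem primitivity_criterion_general
    {k G V : Type*} [Field k] [CharZero k] [Group G]
    [AddCommGroup V] [Module k V] [FiniteDimensional k V]
    (ρ : Representation k G V)
    (hdim : ∀ U : Submodule k (Module.End k V),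
      (∀ f ∈ U, LinearMap.trace k V f = 0) →
      (∀ g : G, ∀ f ∈ U, ρ g * f * ρ g⁻¹ ∈ U) →
      U ≠ ⊥ → Module.finrank k V ≤ Module.finrank k ↥U) :
    ¬ ρ.IsImprimitive := by
  rintro ⟨ι, W, hW, ⟨i, j, hij⟩, hindep, hsup, hperm⟩
  classical
  have hint : IsInternal W := isInternal_submodule_of_iSupIndep_of_iSup_eq_top hindep hsup
  have : Finite ι := WellFoundedGT.finite_of_iSupIndep hindep hW
  have := Fintype.ofFinite ι
  have hcard : Fintype.card ι ≤ finrank k V := by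
    have : Fintype {i // W i ≠ ⊥} := hindep.fintypeNeBotOfFiniteDimensional
    simpa [Fintype.card_subtype, hW] using hindep.subtype_ne_bot_le_finrank
  have hcard2 : 2 ≤ Fintype.card ι := Fintype.one_lt_card_iff.mpr ⟨i, j, hij⟩
  set U := LinearMap.range hint.blockScalar ⊓ LinearMap.ker (LinearMap.trace k V)
  have hU : finrank k U + 1 = Fintype.card ι := by
    rw [Submodule.finrank_inf_ker_add_one hint.one_mem_range_blockScalar
      (by rw [LinearMap.trace_one]; exact Nat.cast_ne_zero.mpr (by omega)),
      LinearMap.finrank_range_of_inj (hint.blockScalar_injective hW),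
      finrank_fintype_fun_eq_card]
  have hstable (g : G) (f : Module.End k V) (hf : f ∈ U) : ρ g * f * ρ g⁻¹ ∈ U :=
    ⟨hint.mul_mul_mem_range_blockScalar (by rw [← map_mul, mul_inv_cancel, map_one])
      (hperm g⁻¹) hf.1,
    show LinearMap.trace k V _ = 0 by
      rw [LinearMap.trace_mul_cycle, ← map_mul, inv_mul_cancel, map_one, one_mul]
      exact hf.2⟩
  have hU0 : U ≠ ⊥ := fun h0 ↦ by rw [h0, finrank_bot] at hU; omega
  have := hdim U (fun f hf ↦ hf.2) hstable hU0
  omega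

/-- If every nonzero `G`-submodule of `sl(V)` has dimension at least
`dim V`, for `V` an irreducible representation of a finite group `G` over an algebraically
closed field of characteristic zero, then `V` is primitive. -/
theorem primitivity_criterion
    {k G V : Type*} [Field k] [IsAlgClosed k] [CharZero k] [Group G] [Finite G]
    [AddCommGroup V] [Module k V] [FiniteDimensional k V]
    (ρ : Representation k G V) (hirr : ρ.IsIrred)
    (hdim : ∀ U : Submodule k (Module.End k V),
      (∀ f ∈ U, LinearMap.trace k V f = 0) →
      (∀ g : G, ∀ f ∈ U, ρ g * f * ρ g⁻¹ ∈ U) →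
      U ≠ ⊥ → Module.finrank k V ≤ Module.finrank k ↥U) :
    ¬ ρ.IsImprimitive :=
  primitivity_criterion_general ρ hdim
end

section
/- Let s be a polynomial in k[x_i, x_j] (coefficients possibly involving other variables) of total degree at most 3 in x_i and x_j satisfying x_i ∂s/∂x_j = x_j ∂s/∂x_i. Then s has the form a + c(x_i² + x_j²) where a and c do not involve x_i, x_j. -/
/-!
Write `c(a, b)` for the coefficient of `x^a y^b` in `s`. Comparing the coefficients of
`x^(a+1) y^(b+1)` on both sides of `x ∂s/∂y = y ∂s/∂x` gives
`(b + 2) c(a, b+2) = (a + 2) c(a+2, b)`, and comparing those of `x^(a+1)` and `y^(b+1)` gives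
`c(a, 1) = c(1, b) = 0`. Since the factors `a + 2` cancel in characteristic zero, the recursion
carries these zeros to every `c(a, b)` with `a` or `b` odd. In total degree at most `3` only
`1`, `x²` and `y²` survive, and the recursion at `a = b = 0` gives `c(0, 2) = c(2, 0)`.
-/

open MvPolynomial

namespace RotationEquation

noncomputable def xyExp (a b : ℕ) : Fin 2 →₀ ℕ := Finsupp.single 0 a + Finsupp.single 1 b

@[simp] lemma xyExp_apply_zero (a b : ℕ) : xyExp a b 0 = a := by simp [xyExp]

@[simp] lemma xyExp_apply_one (a b : ℕ) : xyExp a b 1 = b := by simp [xyExp]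

lemma eq_xyExp (m : Fin 2 →₀ ℕ) : m = xyExp (m 0) (m 1) := by
  ext i; fin_cases i <;> simp

@[simp] lemma xyExp_inj {a b a' b' : ℕ} : xyExp a b = xyExp a' b' ↔ a = a' ∧ b = b' :=
  ⟨fun h => ⟨by simpa using congr($h 0), by simpa using congr($h 1)⟩,
    by rintro ⟨rfl, rfl⟩; rfl⟩

lemma single_zero_add_xyExp (a b : ℕ) : Finsupp.single 0 1 + xyExp a b = xyExp (a + 1) b := by
  ext i; fin_cases i <;> simp [add_comm]

lemma single_one_add_xyExp (a b : ℕ) : Finsupp.single 1 1 + xyExp a b = xyExp a (b + 1) := by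
  ext i; fin_cases i <;> simp [add_comm]

lemma coeff_X_mul_of_apply_eq_zero {σ R : Type*} [CommSemiring R] (p : MvPolynomial σ R)
    {m : σ →₀ ℕ} {i : σ} (hm : m i = 0) : coeff m (X i * p) = 0 := by
  classical
  rw [coeff_X_mul', if_neg (by simpa using hm)]

lemma coeff_X_mul_pderiv {σ R : Type*} [CommSemiring R] (p : MvPolynomial σ R) (i j : σ)
    (m : σ →₀ ℕ) :
    coeff (Finsupp.single i 1 + m) (X i * pderiv j p) =
      coeff (m + Finsupp.single j 1) p * (m j + 1) := by
  rw [coeff_X_mul, coeff_pderiv]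

variable {R : Type*} [CommRing R] {s : MvPolynomial (Fin 2) R}

lemma coeff_X_zero_mul_pderiv_one (p : MvPolynomial (Fin 2) R) (a b : ℕ) :
    coeff (xyExp (a + 1) b) (X 0 * pderiv 1 p) = coeff (xyExp a (b + 1)) p * (b + 1) := by
  rw [← single_zero_add_xyExp, coeff_X_mul_pderiv, add_comm, single_one_add_xyExp,
    xyExp_apply_one]

lemma coeff_X_one_mul_pderiv_zero (p : MvPolynomial (Fin 2) R) (a b : ℕ) :
    coeff (xyExp a (b + 1)) (X 1 * pderiv 0 p) = coeff (xyExp (a + 1) b) p * (a + 1) := by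
  rw [← single_one_add_xyExp, coeff_X_mul_pderiv, add_comm, single_zero_add_xyExp,
    xyExp_apply_zero]

lemma coeff_xyExp_add_two_mul (h : X 0 * pderiv 1 s = X 1 * pderiv 0 s) (a b : ℕ) :
    coeff (xyExp a (b + 2)) s * (b + 2) = coeff (xyExp (a + 2) b) s * (a + 2) := by
  have := congr(coeff (xyExp (a + 1) (b + 1)) $h)
  rw [coeff_X_zero_mul_pderiv_one, coeff_X_one_mul_pderiv_zero] at this
  push_cast at this
  simpa only [add_assoc, one_add_one_eq_two] using this

lemma coeff_xyExp_one_right (h : X 0 * pderiv 1 s = X 1 * pderiv 0 s) (a : ℕ) :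
    coeff (xyExp a 1) s = 0 := by
  have := congr(coeff (xyExp (a + 1) 0) $h)
  rw [coeff_X_mul_of_apply_eq_zero _ (xyExp_apply_one _ _), coeff_X_zero_mul_pderiv_one] at this
  simpa using this

lemma coeff_xyExp_one_left (h : X 0 * pderiv 1 s = X 1 * pderiv 0 s) (b : ℕ) :
    coeff (xyExp 1 b) s = 0 := by
  have := congr(coeff (xyExp 0 (b + 1)) $h)
  rw [coeff_X_mul_of_apply_eq_zero _ (xyExp_apply_zero _ _), coeff_X_one_mul_pderiv_zero] at this
  simpa using this.symm

variable [NoZeroDivisors R] [CharZero R]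

lemma coeff_xyExp_of_odd_left (h : X 0 * pderiv 1 s = X 1 * pderiv 0 s) {a : ℕ} (ha : Odd a)
    (b : ℕ) : coeff (xyExp a b) s = 0 := by
  obtain ⟨n, rfl⟩ := ha
  induction n generalizing b with
  | zero => simpa using coeff_xyExp_one_left h b
  | succ n ih =>
    have step := coeff_xyExp_add_two_mul h (2 * n + 1) b
    rw [ih, zero_mul, eq_comm, mul_eq_zero] at step
    exact step.resolve_right (by norm_cast)

lemma coeff_xyExp_of_odd_right (h : X 0 * pderiv 1 s = X 1 * pderiv 0 s) (a : ℕ) {b : ℕ}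
    (hb : Odd b) : coeff (xyExp a b) s = 0 := by
  obtain ⟨n, rfl⟩ := hb
  induction n generalizing a with
  | zero => simpa using coeff_xyExp_one_right h a
  | succ n ih =>
    have step := coeff_xyExp_add_two_mul h a (2 * n + 1)
    rw [ih, zero_mul, mul_eq_zero] at step
    exact step.resolve_right (by norm_cast)

lemma coeff_xyExp_zero_two (h : X 0 * pderiv 1 s = X 1 * pderiv 0 s) :
    coeff (xyExp 0 2) s = coeff (xyExp 2 0) s := by
  simpa using coeff_xyExp_add_two_mul h 0 0

lemma support_subset_of_totalDegree_le_three (h : X 0 * pderiv 1 s = X 1 * pderiv 0 s)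
    (hdeg : s.totalDegree ≤ 3) : s.support ⊆ {xyExp 0 0, xyExp 2 0, xyExp 0 2} := by
  intro m hm
  have hsum : m 0 + m 1 ≤ 3 := by
    simpa [Finsupp.sum_fintype, Fin.sum_univ_two] using (le_totalDegree hm).trans hdeg
  have hcoeff := mem_support_iff.mp hm
  rw [eq_xyExp m] at hcoeff ⊢
  have h0 : Even (m 0) := Nat.not_odd_iff_even.mp fun ho =>
    hcoeff (coeff_xyExp_of_odd_left h ho _)
  have h1 : Even (m 1) := Nat.not_odd_iff_even.mp fun ho =>
    hcoeff (coeff_xyExp_of_odd_right h _ ho)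
  simp only [Finset.mem_insert, Finset.mem_singleton, xyExp_inj]
  grind

end RotationEquation

open RotationEquation

/-- If `s` is a polynomial in two variables `x, y` over `R` (the ring of the
other variables, a characteristic-zero domain) of total degree at most `3` in these two
variables, satisfying `x ∂s/∂y = y ∂s/∂x`, then `s = a + c (x² + y²)` where `a, c` do not
involve `x, y`. -/
theorem solution_of_rotation_equation
    {R : Type*} [CommRing R] [IsDomain R] [CharZero R]
    (s : MvPolynomial (Fin 2) R) (hdeg : s.totalDegree ≤ 3)
    (h : MvPolynomial.X 0 * MvPolynomial.pderiv 1 s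
        = MvPolynomial.X 1 * MvPolynomial.pderiv 0 s) :
    ∃ a c : R, s = MvPolynomial.C a
        + MvPolynomial.C c * (MvPolynomial.X 0 ^ 2 + MvPolynomial.X 1 ^ 2) := by
  refine ⟨coeff (xyExp 0 0) s, coeff (xyExp 2 0) s, ?_⟩
  conv_lhs => rw [s.as_sum, Finset.sum_subset (support_subset_of_totalDegree_le_three h hdeg)
    fun m _ hm => by rw [notMem_support_iff.mp hm, monomial_zero]]
  rw [Finset.sum_insert (by simp), Finset.sum_pair (by simp), coeff_xyExp_zero_two h]
  simp [xyExp, X_pow_eq_monomial, C_mul_monomial, mul_add]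
end

section
/- Let V be an irreducible self-dual representation of a finite group G over an algebraically closed field of characteristic zero such that Sym²(V) and ∧²(V) have no isomorphic G-submodules. Then any G-stable Lie subalgebra of sl(V) whose intersection with the space sl(V)⁻ of anti-symmetric endomorphisms is zero, is commutative. -/
open scoped TensorProduct

attribute [local instance 100] LieRing.ofAssociativeRing

/-!
Schur's lemma makes the invariant form symmetric or alternating: `B u v = c * B v u` with
`c = ±1`. Under `V ⊗ V ≃ End V`, `w ⊗ u ↦ B w · u`, the `B`-transpose becomes `c` times the swap,
so the self-adjoint and the skew-adjoint endomorphisms correspond to `Sym²V` and `∧²V`, in one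
order or the other. Let `K` be the self-adjoint part of `L` and `W` a `G`-stable complement of `K`
in `L` (Maschke). On `W` both `A ↦ Aᵗ + A` and `A ↦ Aᵗ - A` are injective: the first because `L`
meets the skew-adjoint maps trivially, the second because `W ∩ K = 0`. So `W` is isomorphic to a
`G`-submodule of each of the two parts, hence `W = 0` and `L` consists of self-adjoint maps. The
commutator of two self-adjoint maps is skew-adjoint, so it vanishes.
-/

open LinearMap (BilinForm IsAdjointPair)

namespace Representation

section NoCommonConstituent

variable {k G E : Type*} [CommRing k] [Monoid G] [AddCommGroup E] [Module k E]
  (π : Representation k G E)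

def NoCommonConstituent (X Y : Submodule k E) : Prop :=
  ∀ S T : Submodule k E, S ≤ X → T ≤ Y →
    ∀ hS : ∀ g : G, ∀ x ∈ S, π g x ∈ S, (∀ g : G, ∀ x ∈ T, π g x ∈ T) →
    ∀ e : S ≃ₗ[k] T, (∀ (g : G) (x : S), (e ⟨π g x, hS g x x.2⟩ : E) = π g (e x)) → S = ⊥

variable {π}

theorem NoCommonConstituent.symm {X Y : Submodule k E} (h : π.NoCommonConstituent X Y) :
    π.NoCommonConstituent Y X := by
  intro S T hSY hTX hS hT e he
  have hT_bot : T = ⊥ := h T S hTX hSY hT hS e.symm fun g y => by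
    obtain ⟨x, rfl⟩ := e.surjective y
    have hgx : (⟨π g (e x), hT g _ (e x).2⟩ : T) = e ⟨π g x, hS g x x.2⟩ :=
      Subtype.ext (he g x).symm
    rw [hgx, e.symm_apply_apply, e.symm_apply_apply]
  exact Submodule.subsingleton_iff_eq_bot.mp
    (e.toEquiv.subsingleton_congr.mpr (Submodule.subsingleton_iff_eq_bot.mpr hT_bot))

theorem NoCommonConstituent.eq_bot_of_injective {X Y W : Submodule k E}
    (h : π.NoCommonConstituent X Y) (hW : ∀ g : G, ∀ x ∈ W, π g x ∈ W)
    {f₁ f₂ : Module.End k E} (hf₁ : ∀ g, Commute f₁ (π g)) (hf₂ : ∀ g, Commute f₂ (π g))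
    (hi₁ : Function.Injective (f₁ ∘ₗ W.subtype)) (hi₂ : Function.Injective (f₂ ∘ₗ W.subtype))
    (hX : W.map f₁ ≤ X) (hY : W.map f₂ ≤ Y) : W = ⊥ := by
  have hstable {f : Module.End k E} (hf : ∀ g, Commute f (π g)) (g : G) :
      ∀ x ∈ LinearMap.range (f ∘ₗ W.subtype), π g x ∈ LinearMap.range (f ∘ₗ W.subtype) := by
    rintro _ ⟨w, rfl⟩
    exact ⟨⟨π g w, hW g w w.2⟩, LinearMap.congr_fun (hf g).eq w⟩
  set e₁ := LinearEquiv.ofInjective _ hi₁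
  set e₂ := LinearEquiv.ofInjective _ hi₂
  have hrange : LinearMap.range (f₁ ∘ₗ W.subtype) = ⊥ := by
    refine h _ _ ?_ ?_ (hstable hf₁) (hstable hf₂) (e₁.symm.trans e₂) fun g x => ?_
    · rwa [LinearMap.range_comp, Submodule.range_subtype]
    · rwa [LinearMap.range_comp, Submodule.range_subtype]
    obtain ⟨w, rfl⟩ := e₁.surjective x
    have hgw : (⟨π g (e₁ w), hstable hf₁ g _ (e₁ w).2⟩ : LinearMap.range (f₁ ∘ₗ W.subtype)) =
        e₁ ⟨π g w, hW g w w.2⟩ :=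
      Subtype.ext (LinearMap.congr_fun (hf₁ g).eq w).symm
    simp only [LinearEquiv.trans_apply, hgw, LinearEquiv.symm_apply_apply]
    exact LinearMap.congr_fun (hf₂ g).eq w
  exact Submodule.subsingleton_iff_eq_bot.mp
    (e₁.toEquiv.subsingleton_congr.mpr (Submodule.subsingleton_iff_eq_bot.mpr hrange))

theorem NoCommonConstituent.smul [NoZeroDivisors k] {τ : Module.End k E} {c : k}
    (hc : c * c = 1)
    (h : π.NoCommonConstituent (LinearMap.ker (τ - 1)) (LinearMap.ker (τ + 1))) :
    π.NoCommonConstituent (LinearMap.ker (c • τ - 1)) (LinearMap.ker (c • τ + 1)) := by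
  rcases mul_self_eq_one_iff.mp hc with rfl | rfl
  · simpa only [one_smul] using h
  · have h₁ : (-1 : k) • τ - 1 = -(τ + 1) := by rw [neg_one_smul]; abel
    have h₂ : (-1 : k) • τ + 1 = -(τ - 1) := by rw [neg_one_smul]; abel
    rw [h₁, h₂, LinearMap.ker_neg, LinearMap.ker_neg]
    exact h.symm

end NoCommonConstituent

section Maschke

variable {k G E : Type*} [Field k] [Group G] [Finite G] [NeZero (Nat.card G : k)]
  [AddCommGroup E] [Module k E] {π : Representation k G E}

theorem exists_stable_disjoint_sup_eq {K M : Submodule k E}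
    (hK : ∀ g : G, ∀ x ∈ K, π g x ∈ K) (hM : ∀ g : G, ∀ x ∈ M, π g x ∈ M) (hKM : K ≤ M) :
    ∃ W : Submodule k E, (∀ g : G, ∀ x ∈ W, π g x ∈ W) ∧ Disjoint K W ∧ K ⊔ W = M := by
  obtain ⟨C, hC⟩ := exists_isCompl (⟨K, fun g _ hx => hK g _ hx⟩ : Subrepresentation π)
  have hdisj : Disjoint K C.toSubmodule :=
    disjoint_iff.mpr (congrArg Subrepresentation.toSubmodule (disjoint_iff.mp hC.disjoint))
  have hcodisj : K ⊔ C.toSubmodule = ⊤ :=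
    congrArg Subrepresentation.toSubmodule (codisjoint_iff.mp hC.codisjoint)
  refine ⟨C.toSubmodule ⊓ M, fun g x hx => ⟨C.apply_mem_toSubmodule g hx.1, hM g x hx.2⟩,
    hdisj.mono_right inf_le_left, ?_⟩
  rw [← sup_inf_assoc_of_le _ hKM, hcodisj, top_inf_eq]

theorem le_ker_sub_one_of_disjoint {σ : Module.End k E} (hσ : σ * σ = 1)
    (hσπ : ∀ g, Commute σ (π g))
    (hnc : π.NoCommonConstituent (LinearMap.ker (σ - 1)) (LinearMap.ker (σ + 1)))
    {M : Submodule k E} (hM : ∀ g : G, ∀ x ∈ M, π g x ∈ M)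
    (hdisj : Disjoint M (LinearMap.ker (σ + 1))) :
    M ≤ LinearMap.ker (σ - 1) := by
  set K := M ⊓ LinearMap.ker (σ - 1)
  have hK : ∀ g : G, ∀ x ∈ K, π g x ∈ K := by
    intro g x hx
    obtain ⟨hxM, hxσ⟩ := Submodule.mem_inf.mp hx
    refine Submodule.mem_inf.mpr ⟨hM g x hxM, ?_⟩
    rw [LinearMap.mem_ker, ← Module.End.mul_apply, ((hσπ g).sub_left (Commute.one_left _)).eq,
      Module.End.mul_apply, LinearMap.mem_ker.mp hxσ, map_zero]
  obtain ⟨W, hW, hKW, hKWM⟩ := exists_stable_disjoint_sup_eq hK hM inf_le_left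
  have hWM : W ≤ M := hKWM ▸ le_sup_right
  have hsq : (σ - 1) * (σ + 1) = 0 ∧ (σ + 1) * (σ - 1) = 0 := by
    constructor <;> noncomm_ring <;> rw [hσ] <;> abel
  have hW_bot : W = ⊥ := by
    refine hnc.eq_bot_of_injective hW (fun g => (hσπ g).add_left (Commute.one_left _))
      (fun g => (hσπ g).sub_left (Commute.one_left _)) ?_ ?_ ?_ ?_
    · refine (injective_iff_map_eq_zero _).mpr fun w hw => Subtype.ext ?_
      exact Submodule.disjoint_def.mp hdisj w (hWM w.2) hw
    · refine (injective_iff_map_eq_zero _).mpr fun w hw => Subtype.ext ?_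
      exact Submodule.disjoint_def.mp hKW w (Submodule.mem_inf.mpr ⟨hWM w.2, hw⟩) w.2
    · rintro _ ⟨w, -, rfl⟩
      rw [LinearMap.mem_ker, ← Module.End.mul_apply, hsq.1, LinearMap.zero_apply]
    · rintro _ ⟨w, -, rfl⟩
      rw [LinearMap.mem_ker, ← Module.End.mul_apply, hsq.2, LinearMap.zero_apply]
  rw [← hKWM, hW_bot, sup_bot_eq]
  exact inf_le_right

end Maschke

theorem isAdjointPair_inv {k G V : Type*} [CommRing k] [Group G] [AddCommGroup V] [Module k V]
    (ρ : Representation k G V) {B : BilinForm k V} (hBρ : ∀ g, B.IsOrthogonal (ρ g)) (g : G) :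
    IsAdjointPair B B (ρ g) (ρ g⁻¹) := fun v u => by
  rw [← hBρ g v (ρ g⁻¹ u), self_inv_apply]

theorem commute_comm_tprod {k G V : Type*} [CommSemiring k] [Monoid G] [AddCommMonoid V]
    [Module k V] (ρ : Representation k G V) (g : G) :
    Commute (_root_.TensorProduct.comm k V V).toLinearMap (ρ.tprod ρ g) :=
  LinearMap.ext fun x => (TensorProduct.map_comm (ρ g) (ρ g) x).symm

namespace IsIrred

variable {k G V : Type*} [Field k] [IsAlgClosed k] [AddCommGroup V] [Module k V]
  [FiniteDimensional k V]

theorem exists_eq_smul_one [Monoid G] {ρ : Representation k G V} (hρ : ρ.IsIrred)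
    {D : Module.End k V} (hD : ∀ g, Commute D (ρ g)) : ∃ c : k, D = c • 1 := by
  obtain ⟨_, hsimple⟩ := hρ
  obtain ⟨c, hc⟩ := Module.End.exists_eigenvalue D
  have hstable : ∀ g, ∀ v ∈ D.eigenspace c, ρ g v ∈ D.eigenspace c := by
    intro g v hv
    rw [Module.End.mem_eigenspace_iff] at hv ⊢
    rw [← Module.End.mul_apply, (hD g).eq, Module.End.mul_apply, hv, map_smul]
  have htop : D.eigenspace c = ⊤ := (hsimple _ hstable).resolve_left hc
  refine ⟨c, LinearMap.ext fun v => ?_⟩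
  simpa using Module.End.mem_eigenspace_iff.mp (htop ▸ Submodule.mem_top : v ∈ D.eigenspace c)

theorem exists_eq_mul_swap [Group G] {ρ : Representation k G V} (hρ : ρ.IsIrred)
    {B : BilinForm k V} (hB : B.Nondegenerate) (hBρ : ∀ g, B.IsOrthogonal (ρ g)) :
    ∃ c : k, c * c = 1 ∧ ∀ u v, B u v = c * B v u := by
  set D := B.flip.symmCompOfNondegenerate B hB
  have hD (v u : V) : B (D v) u = B u v := by
    rw [LinearMap.BilinForm.comp_symmCompOfNondegenerate_apply]
    rfl
  have hDρ (g : G) : Commute D (ρ g) := by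
    refine LinearMap.ext fun v =>
      (LinearMap.BilinForm.toDual B hB).injective (LinearMap.ext fun u => ?_)
    change B (D (ρ g v)) u = B (ρ g (D v)) u
    rw [hD, ρ.isAdjointPair_inv hBρ, hD, ρ.isAdjointPair_inv hBρ, inv_inv]
  obtain ⟨c, hc⟩ := hρ.exists_eq_smul_one hDρ
  have hswap (u v : V) : B u v = c * B v u := by
    rw [← hD, hc]
    simp
  have := hρ.1
  obtain ⟨v, u, hvu⟩ : ∃ v u, B v u ≠ 0 := by
    by_contra! h
    exact hB.ne_zero (LinearMap.ext₂ h)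
  refine ⟨c, mul_right_cancel₀ hvu ?_, hswap⟩
  rw [mul_assoc, ← hswap, ← hswap, one_mul]

end IsIrred

end Representation

namespace LinearMap.BilinForm

variable {k V : Type*} [Field k] [AddCommGroup V] [Module k V] [FiniteDimensional k V]

noncomputable def tensorEquivEnd (B : BilinForm k V) (hB : B.Nondegenerate) :
    V ⊗[k] V ≃ₗ[k] Module.End k V :=
  (TensorProduct.congr (B.toDual hB) (LinearEquiv.refl k V)).trans (dualTensorHomEquiv k V V)

variable {B : BilinForm k V} {hB : B.Nondegenerate}

theorem tensorEquivEnd_tmul (w u v : V) : B.tensorEquivEnd hB (w ⊗ₜ u) v = B w v • u := by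
  simp [tensorEquivEnd, toDual_def]

theorem tensorEquivEnd_map {f f' h : Module.End k V} (hf : IsAdjointPair B B f f')
    (x : V ⊗[k] V) :
    B.tensorEquivEnd hB (TensorProduct.map f h x) = h * B.tensorEquivEnd hB x * f' := by
  induction x using TensorProduct.induction_on with
  | zero => simp
  | tmul w u => ext v; simp [tensorEquivEnd_tmul, hf w v]
  | add x y hx hy => simp [hx, hy, add_mul, mul_add]

theorem isAdjointPair_tensorEquivEnd_smul_comm {c : k} (hc : ∀ u v, B u v = c * B v u)
    (x : V ⊗[k] V) :
    IsAdjointPair B B (B.tensorEquivEnd hB (c • TensorProduct.comm k V V x))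
      (B.tensorEquivEnd hB x) := by
  induction x using TensorProduct.induction_on with
  | zero => intro v u; simp
  | tmul w s =>
    intro v u
    simp only [TensorProduct.comm_tmul, map_smul, LinearMap.smul_apply, tensorEquivEnd_tmul,
      smul_eq_mul]
    rw [hc v s]
    ring
  | add x y hx hy =>
    rw [map_add, smul_add, map_add, map_add]
    exact hx.add hy

theorem isSelfAdjoint_tensorEquivEnd {c : k} (hc : ∀ u v, B u v = c * B v u) {x : V ⊗[k] V}
    (hx : c • TensorProduct.comm k V V x = x) :
    LinearMap.IsSelfAdjoint B (B.tensorEquivEnd hB x) := by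
  have := isAdjointPair_tensorEquivEnd_smul_comm (hB := hB) hc x
  rwa [hx] at this

theorem isSkewAdjoint_tensorEquivEnd {c : k} (hc : ∀ u v, B u v = c * B v u) {x : V ⊗[k] V}
    (hx : c • TensorProduct.comm k V V x = -x) :
    LinearMap.IsSkewAdjoint B (B.tensorEquivEnd hB x) := by
  intro v u
  have := isAdjointPair_tensorEquivEnd_smul_comm (hB := hB) hc x v u
  rw [hx, map_neg, LinearMap.neg_apply, map_neg, LinearMap.neg_apply] at this
  rw [Pi.neg_apply, map_neg, ← this, neg_neg]

end LinearMap.BilinForm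

section SelfAdjoint

variable {R M : Type*} [CommRing R] [AddCommGroup M] [Module R M] {B : BilinForm R M}

theorem LinearMap.IsSelfAdjoint.isSkewAdjoint_lie {f g : Module.End R M}
    (hf : LinearMap.IsSelfAdjoint B f) (hg : LinearMap.IsSelfAdjoint B g) :
    LinearMap.IsSkewAdjoint B (⁅f, g⁆ : Module.End R M) := by
  have hfg : IsAdjointPair B B (f * g) (g * f) := hf.mul hg
  have hgf : IsAdjointPair B B (g * f) (f * g) := hg.mul hf
  rw [LinearMap.IsSkewAdjoint, ← LinearMap.coe_neg, Ring.lie_def, neg_sub]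
  exact hfg.sub hgf

theorem LieSubalgebra.isLieAbelian_of_isSelfAdjoint {L : LieSubalgebra R (Module.End R M)}
    (hself : ∀ f ∈ L, LinearMap.IsSelfAdjoint B f)
    (hskew : ∀ f ∈ L, LinearMap.IsSkewAdjoint B f → f = 0) : IsLieAbelian L :=
  ⟨fun f g => Subtype.ext <| hskew _ (L.lie_mem f.2 g.2) <|
    (hself f f.2).isSkewAdjoint_lie (hself g g.2)⟩

end SelfAdjoint

theorem subalgebra_meeting_antisymmetric_trivially_is_abelian_general
    {k G V : Type*} [Field k] [IsAlgClosed k] [CharZero k] [Group G] [Finite G]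
    [AddCommGroup V] [Module k V] [FiniteDimensional k V]
    (ρ : Representation k G V) (hirr : ρ.IsIrred)
    (B : V →ₗ[k] V →ₗ[k] k)
    (hBnd : ∀ v : V, (∀ u : V, B v u = 0) → v = 0)
    (hBinv : ∀ (g : G) (v u : V), B (ρ g v) (ρ g u) = B v u)
    (hnc : ∀ S T : Submodule k (V ⊗[k] V),
      S ≤ LinearMap.ker ((TensorProduct.comm k V V).toLinearMap - LinearMap.id) →
      T ≤ LinearMap.ker ((TensorProduct.comm k V V).toLinearMap + LinearMap.id) →
      ∀ hS : ∀ (g : G), ∀ x ∈ S, TensorProduct.map (ρ g) (ρ g) x ∈ S,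
      (∀ (g : G), ∀ x ∈ T, TensorProduct.map (ρ g) (ρ g) x ∈ T) →
      ∀ e : ↥S ≃ₗ[k] ↥T,
        (∀ (g : G) (x : ↥S),
          (e ⟨TensorProduct.map (ρ g) (ρ g) (x : V ⊗[k] V), hS g x x.2⟩ : V ⊗[k] V)
            = TensorProduct.map (ρ g) (ρ g) (e x : V ⊗[k] V)) →
        S = ⊥)
    (L : LieSubalgebra k (Module.End k V))
    (hstab : ρ.StableLieSubalgebra L)
    (hmeet : ∀ f ∈ L, (∀ v u : V, B (f v) u = - B v (f u)) → f = 0) :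
    IsLieAbelian ↥L := by
  have hB := LinearMap.BilinForm.Nondegenerate.ofSeparatingLeft hBnd
  obtain ⟨c, hc, hBc⟩ := hirr.exists_eq_mul_swap hB hBinv
  set Φ := LinearMap.BilinForm.tensorEquivEnd B hB
  set σ : Module.End k (V ⊗[k] V) := c • (TensorProduct.comm k V V).toLinearMap
  have hσ : σ * σ = 1 := LinearMap.ext fun x => by simp [σ, smul_smul, hc]
  have hskew (f) (hf : f ∈ L) (hfs : LinearMap.IsSkewAdjoint B f) : f = 0 :=
    hmeet f hf fun v u => by rw [hfs v u, Pi.neg_apply, map_neg]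
  have hnc' : (ρ.tprod ρ).NoCommonConstituent
      (LinearMap.ker ((TensorProduct.comm k V V).toLinearMap - 1))
      (LinearMap.ker ((TensorProduct.comm k V V).toLinearMap + 1)) := hnc
  have hM : L.toSubmodule.comap Φ.toLinearMap ≤ LinearMap.ker (σ - 1) := by
    refine (ρ.tprod ρ).le_ker_sub_one_of_disjoint hσ
      (fun g => (ρ.commute_comm_tprod g).smul_left c) (hnc'.smul hc) (fun g x hx => ?_) ?_
    · show Φ (TensorProduct.map (ρ g) (ρ g) x) ∈ L
      rw [LinearMap.BilinForm.tensorEquivEnd_map (ρ.isAdjointPair_inv hBinv g)]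
      exact hstab g _ hx
    · refine Submodule.disjoint_def.mpr fun x hx hσx => Φ.map_eq_zero_iff.mp (hskew _ hx ?_)
      exact LinearMap.BilinForm.isSkewAdjoint_tensorEquivEnd hBc (eq_neg_of_add_eq_zero_left hσx)
  refine LieSubalgebra.isLieAbelian_of_isSelfAdjoint (fun f hf => ?_) hskew
  obtain ⟨x, rfl⟩ := Φ.surjective f
  exact LinearMap.BilinForm.isSelfAdjoint_tensorEquivEnd hBc (sub_eq_zero.mp (hM hf))

/-- Let `V` be an irreducible self-dual representation of a finite group `G`
over an algebraically closed field of characteristic zero (self-duality being witnessed by a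
nondegenerate `G`-invariant bilinear form `B`), such that `Sym²(V)` and `∧²(V)` (realized as
the symmetric and antisymmetric tensors in `V ⊗ V`, i.e. the `±1`-eigenspaces of the swap map)
have no isomorphic `G`-submodules.  Then any `G`-stable Lie subalgebra of `sl(V)` meeting the
space `sl(V)⁻` of anti-symmetric endomorphisms (with respect to `B`) trivially is abelian. -/
theorem subalgebra_meeting_antisymmetric_trivially_is_abelian
    {k G V : Type*} [Field k] [IsAlgClosed k] [CharZero k] [Group G] [Finite G]
    [AddCommGroup V] [Module k V] [FiniteDimensional k V]
    (ρ : Representation k G V) (hirr : ρ.IsIrred)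
    (B : V →ₗ[k] V →ₗ[k] k)
    (hBnd : ∀ v : V, (∀ u : V, B v u = 0) → v = 0)
    (hBinv : ∀ (g : G) (v u : V), B (ρ g v) (ρ g u) = B v u)
    (hnc : ∀ S T : Submodule k (V ⊗[k] V),
      S ≤ LinearMap.ker ((TensorProduct.comm k V V).toLinearMap - LinearMap.id) →
      T ≤ LinearMap.ker ((TensorProduct.comm k V V).toLinearMap + LinearMap.id) →
      ∀ hS : ∀ (g : G), ∀ x ∈ S, TensorProduct.map (ρ g) (ρ g) x ∈ S,
      (∀ (g : G), ∀ x ∈ T, TensorProduct.map (ρ g) (ρ g) x ∈ T) →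
      ∀ e : ↥S ≃ₗ[k] ↥T,
        (∀ (g : G) (x : ↥S),
          (e ⟨TensorProduct.map (ρ g) (ρ g) (x : V ⊗[k] V), hS g x x.2⟩ : V ⊗[k] V)
            = TensorProduct.map (ρ g) (ρ g) (e x : V ⊗[k] V)) →
        S = ⊥)
    (L : LieSubalgebra k (Module.End k V))
    (hsl : ∀ f ∈ L, LinearMap.trace k V f = 0)
    (hstab : ρ.StableLieSubalgebra L)
    (hmeet : ∀ f ∈ L, (∀ v u : V, B (f v) u = - B v (f u)) → f = 0) :
    IsLieAbelian ↥L :=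
  subalgebra_meeting_antisymmetric_trivially_is_abelian_general ρ hirr B hBnd hBinv hnc L hstab
    hmeet
end

section
/- If M is a finitely generated graded module over a graded polynomial ring and b_{i₀,j} = 0 for all j ≤ j₀, then b_{i,j} = 0 for all i ≥ i₀ and all j ≤ j₀. -/
/-!
Call a generator of `F i` *low* if its degree is at most `i + j₀`. If `F i` has no low
generator and `c` were a low generator of `F (i + 1)`, then every entry of column `c` of the
differential `F (i + 1) → F i` would be homogeneous of non-positive degree with zero constant term,
hence zero. The basis vector `e_c` would then be a cycle, hence a boundary; but by minimality
all boundaries have coordinates without constant term, while `e_c` has the coordinate `1`.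
-/

open MvPolynomial

theorem MvPolynomial.IsWeightedHomogeneous.eq_zero_of_constantCoeff_eq_zero {σ R : Type*}
    [CommSemiring R] {w : σ → ℕ} (hw : ∀ s, 0 < w s) {p : MvPolynomial σ R}
    (hp : IsWeightedHomogeneous w p 0) (hc : constantCoeff p = 0) : p = 0 := by
  rw [← hp.weightedHomogeneousComponent_same,
    weightedHomogeneousComponent_zero p fun s => (hw s).ne', ← constantCoeff_eq, hc, C_0]

theorem MvPolynomial.eq_zero_of_graded_of_le {σ R : Type*} [CommSemiring R] {w : σ → ℕ}
    (hw : ∀ s, 0 < w s) {p : MvPolynomial σ R} {d e : ℤ}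
    (hp : IsWeightedHomogeneous w p (e - d).toNat ∧ (e < d → p = 0))
    (hc : constantCoeff p = 0) (hle : e ≤ d) : p = 0 := by
  rcases hle.lt_or_eq with hlt | rfl
  · exact hp.2 hlt
  · exact IsWeightedHomogeneous.eq_zero_of_constantCoeff_eq_zero hw (by simpa using hp.1) hc

theorem Matrix.exists_ne_zero_of_range_mulVecLin_eq_ker {R m n p : Type*} [CommRing R]
    [Fintype n] [Fintype p] [DecidableEq n] {A : Matrix m n R} {B : Matrix n p R}
    {I : Ideal R} (hI : I ≠ ⊤) (hB : ∀ r c, B r c ∈ I)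
    (hexact : LinearMap.range B.mulVecLin = LinearMap.ker A.mulVecLin) (c : n) :
    ∃ r, A r c ≠ 0 := by
  by_contra! hcol
  have hcycle : Pi.single c 1 ∈ LinearMap.ker A.mulVecLin := by
    ext r
    simp [mulVec_single, hcol r]
  rw [← hexact] at hcycle
  obtain ⟨v, hv⟩ := hcycle
  have hboundary : B.mulVec v c ∈ I :=
    Ideal.sum_mem _ fun d _ => Ideal.mul_mem_right _ _ (hB c d)
  rw [← mulVecLin_apply, hv, Pi.single_eq_same] at hboundary
  exact hI ((Ideal.eq_top_iff_one I).mpr hboundary)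

theorem lt_deg_of_minimal_exact {kk σ m n p : Type*} [CommRing kk] [Nontrivial kk]
    [Fintype n] [Fintype p] [DecidableEq n] {w : σ → ℕ} (hw : ∀ s, 0 < w s)
    {degS : m → ℤ} {degT : n → ℤ}
    {A : Matrix m n (MvPolynomial σ kk)} {B : Matrix n p (MvPolynomial σ kk)}
    (hgraded : ∀ r c, IsWeightedHomogeneous w (A r c) ((degT c - degS r).toNat) ∧
      (degT c < degS r → A r c = 0))
    (hminA : ∀ r c, constantCoeff (A r c) = 0) (hminB : ∀ r c, constantCoeff (B r c) = 0)
    (hexact : LinearMap.range B.mulVecLin = LinearMap.ker A.mulVecLin)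
    {a : ℤ} (hS : ∀ r, a < degS r) (c : n) : a + 1 < degT c := by
  by_contra! hc
  obtain ⟨r, hr⟩ := Matrix.exists_ne_zero_of_range_mulVecLin_eq_ker
    (I := RingHom.ker (constantCoeff : MvPolynomial σ kk →+* kk))
    (RingHom.ker_ne_top _) hminB hexact c
  exact hr (eq_zero_of_graded_of_le hw (hgraded r c) (hminA r c) (by linarith [hS r]))

theorem forall_le_card_fiber_eq_zero_iff {ι : Type*} [Finite ι] (f : ι → ℤ) (a b : ℤ) :
    (∀ j ≤ b, Nat.card {x // f x = a + j} = 0) ↔ ∀ x, a + b < f x := by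
  simp only [Finite.card_eq_zero_iff, isEmpty_subtype]
  constructor
  · intro h x
    by_contra! hx
    exact h (f x - a) (by linarith) x (by ring)
  · intro h j hj x hx
    linarith [h x]

/-- Let `P` be a graded polynomial ring over a field `k` (finitely many
variables, each of positive degree) and let `M` be a finitely generated graded `P`-module,
presented here via a minimal graded free resolution
`⋯ → F₂ → F₁ → F₀ (→ M → 0)`, where `F i` is free with `rank i` generators, the generator `c`
of `F i` sitting in degree `deg i c`, and the differential `F (i+1) → F i` is given by the
matrix `A i` of homogeneous entries; minimality means all entries of the differentials have
vanishing constant term.  The graded Betti number `b_{i,j}` is the number of generators of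
`F i` of degree `i + j`.  If `b_{i₀, j} = 0` for all `j ≤ j₀`, then `b_{i,j} = 0` for all
`i ≥ i₀` and all `j ≤ j₀`. -/
theorem betti_vanishing_propagates
    {kk : Type*} [Field kk] {n : ℕ} (w : Fin n → ℕ) (hw : ∀ s, 0 < w s)
    (rank : ℕ → ℕ) (deg : (i : ℕ) → Fin (rank i) → ℤ)
    (A : (i : ℕ) → Matrix (Fin (rank i)) (Fin (rank (i + 1))) (MvPolynomial (Fin n) kk))
    -- the differentials are graded (degree-zero) maps
    (hgraded : ∀ (i : ℕ) (r : Fin (rank i)) (c : Fin (rank (i + 1))),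
      IsWeightedHomogeneous w (A i r c) ((deg (i + 1) c - deg i r).toNat) ∧
      (deg (i + 1) c < deg i r → A i r c = 0))
    -- the complex is exact at every `F i` with `i ≥ 1` (so it is a free resolution of
    -- `M := coker (F₁ → F₀)`)
    (hexact : ∀ i : ℕ,
      LinearMap.range (A (i + 1)).mulVecLin = LinearMap.ker (A i).mulVecLin)
    -- minimality
    (hmin : ∀ (i : ℕ) (r : Fin (rank i)) (c : Fin (rank (i + 1))),
      constantCoeff (A i r c) = 0)
    (i₀ : ℕ) (j₀ : ℤ)
    (h : ∀ j : ℤ, j ≤ j₀ → Nat.card {r : Fin (rank i₀) // deg i₀ r = (i₀ : ℤ) + j} = 0) :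
    ∀ i : ℕ, i₀ ≤ i → ∀ j : ℤ, j ≤ j₀ →
      Nat.card {r : Fin (rank i) // deg i r = (i : ℤ) + j} = 0 := by
  intro i hi
  rw [forall_le_card_fiber_eq_zero_iff] at h ⊢
  induction i, hi using Nat.le_induction with
  | base => exact h
  | succ i _ ih =>
    intro c
    have := lt_deg_of_minimal_exact hw (hgraded i) (hmin i) (hmin (i + 1)) (hexact i) ih c
    push_cast
    linarith
end
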